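/- Let Λ = {Λ_i ∈ B(X₂, Y_i)} be a pg-Bessel sequence for X₂ with bound B_Λ and Θ = {Θ_i ∈ B(X₁^*, Y_i^*)} a qg-Bessel sequence for X₁^* with bound B_Θ. For m ∈ ℓ^∞, the operator M_{m,Λ,Θ} : X₁^* → X₂^*, M_{m,Λ,Θ}(g) = Σ_i m_i Λ_i^* Θ_i g, is well defined, the series converges unconditionally for every g ∈ X₁^*, and ‖M_{m,Λ,Θ}‖ ≤ B_Λ B_Θ ‖m‖_∞. -/

import Mathlib

/-!
Pairing `Σ mᵢ Λᵢ* Θᵢ g` with `x ∈ X₂` gives `Σ mᵢ (Θᵢ g)(Λᵢ x)`, which Hölder's inequality bounds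
on every finite set `t` by `‖m‖_∞ (Σ_t ‖Θᵢ g‖^q)^{1/q} (Σ_t ‖Λᵢ x‖^p)^{1/p}`. The Bessel bound of `Λ`
turns this into `‖Σ_t mᵢ Λᵢ* Θᵢ g‖ ≤ ‖m‖_∞ B_Λ (Σ_t ‖Θᵢ g‖^q)^{1/q}`. Since `(‖Θᵢ g‖^q)` is summable,
the right-hand side is small on finite sets far out, so the partial sums are Cauchy in the Banach
space `X₂*`; letting `t` grow, the Bessel bound of `Θ` gives the norm estimate.
-/

open NormedSpace Filter

/-- The Banach-space adjoint (dual map) of a continuous linear map. -/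
noncomputable def opAdj {X Y : Type*} [NormedAddCommGroup X] [NormedSpace ℝ X]
    [NormedAddCommGroup Y] [NormedSpace ℝ Y] (T : X →L[ℝ] Y) :
    StrongDual ℝ Y →L[ℝ] StrongDual ℝ X :=
  (ContinuousLinearMap.compL ℝ X Y ℝ).flip T

lemma opAdj_apply {X Y : Type*} [NormedAddCommGroup X] [NormedSpace ℝ X]
    [NormedAddCommGroup Y] [NormedSpace ℝ Y] (T : X →L[ℝ] Y) (f : StrongDual ℝ Y) (x : X) :
    opAdj T f x = f (T x) :=
  rfl

lemma Real.rpow_finset_sum_le_rpow_tsum {ι : Type*} {a : ι → ℝ} (ha : Summable a)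
    (ha₀ : ∀ i, 0 ≤ a i) {r : ℝ} (hr : 0 ≤ r) (t : Finset ι) :
    (∑ i ∈ t, a i) ^ r ≤ (∑' i, a i) ^ r :=
  Real.rpow_le_rpow (Finset.sum_nonneg fun i _ => ha₀ i)
    (ha.sum_le_tsum t fun i _ => ha₀ i) hr

lemma summable_of_norm_finset_sum_le_mul_rpow {ι E : Type*} [NormedAddCommGroup E]
    [CompleteSpace E] {f : ι → E} {a : ι → ℝ} (ha : Summable a) (ha₀ : ∀ i, 0 ≤ a i)
    {r C : ℝ} (hr : 0 < r) (hC : 0 ≤ C)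
    (hf : ∀ t : Finset ι, ‖∑ i ∈ t, f i‖ ≤ C * (∑ i ∈ t, a i) ^ r) :
    Summable f := by
  rw [summable_iff_vanishing_norm]
  intro ε hε
  have hε' : 0 < ε / (C + 1) := by positivity
  obtain ⟨s, hs⟩ := summable_iff_vanishing_norm.1 ha _ (Real.rpow_pos_of_pos hε' r⁻¹)
  refine ⟨s, fun t ht => ?_⟩
  have hsum₀ : 0 ≤ ∑ i ∈ t, a i := Finset.sum_nonneg fun i _ => ha₀ i
  have hsmall : (∑ i ∈ t, a i) ^ r < ε / (C + 1) := by
    have := hs t ht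
    rwa [Real.norm_of_nonneg hsum₀, Real.lt_rpow_inv_iff_of_pos hsum₀ hε'.le hr] at this
  calc ‖∑ i ∈ t, f i‖ ≤ C * (∑ i ∈ t, a i) ^ r := hf t
    _ ≤ (C + 1) * (∑ i ∈ t, a i) ^ r := by gcongr; linarith
    _ < (C + 1) * (ε / (C + 1)) := by gcongr
    _ = ε := by field_simp

section Multiplier

variable {X : Type*} [NormedAddCommGroup X] [NormedSpace ℝ X]
  {ι : Type*} [Nonempty ι] {Y : ι → Type*}
  [∀ i, NormedAddCommGroup (Y i)] [∀ i, NormedSpace ℝ (Y i)]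
  {p q : ℝ} {Λ : ∀ i, X →L[ℝ] Y i} {φ : ∀ i, StrongDual ℝ (Y i)} {m : ι → ℝ} {M : ℝ}

lemma norm_finset_sum_smul_opAdj_apply_le (hpq : p.HolderConjugate q) (hm : ∀ i, |m i| ≤ M)
    (t : Finset ι) (x : X) :
    ‖(∑ i ∈ t, m i • opAdj (Λ i) (φ i)) x‖ ≤
      M * ((∑ i ∈ t, ‖φ i‖ ^ q) ^ (1 / q) * (∑ i ∈ t, ‖Λ i x‖ ^ p) ^ (1 / p)) := by
  have holder : ∑ i ∈ t, ‖φ i‖ * ‖Λ i x‖ ≤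
      (∑ i ∈ t, ‖φ i‖ ^ q) ^ (1 / q) * (∑ i ∈ t, ‖Λ i x‖ ^ p) ^ (1 / p) :=
    Real.inner_le_Lp_mul_Lq_of_nonneg t hpq.symm (fun i _ => norm_nonneg _)
      fun i _ => norm_nonneg _
  calc ‖(∑ i ∈ t, m i • opAdj (Λ i) (φ i)) x‖
      ≤ ∑ i ∈ t, |m i| * ‖φ i (Λ i x)‖ := by
        rw [_root_.sum_apply]
        refine (norm_sum_le _ _).trans_eq (Finset.sum_congr rfl fun i _ => ?_)
        rw [_root_.smul_apply, opAdj_apply, norm_smul, Real.norm_eq_abs]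
    _ ≤ ∑ i ∈ t, M * (‖φ i‖ * ‖Λ i x‖) :=
        Finset.sum_le_sum fun i _ =>
          mul_le_mul (hm i) ((φ i).le_opNorm _) (norm_nonneg _) ((abs_nonneg _).trans (hm i))
    _ = M * ∑ i ∈ t, ‖φ i‖ * ‖Λ i x‖ := (Finset.mul_sum _ _ _).symm
    _ ≤ _ := by
        have hM₀ : 0 ≤ M := (abs_nonneg _).trans (hm (Classical.arbitrary ι))
        gcongr

lemma norm_finset_sum_smul_opAdj_le (hpq : p.HolderConjugate q) (hm : ∀ i, |m i| ≤ M)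
    {B : ℝ} (hB : 0 ≤ B)
    (hΛ : ∀ x : X, Summable (fun i => ‖Λ i x‖ ^ p) ∧ (∑' i, ‖Λ i x‖ ^ p) ^ (1 / p) ≤ B * ‖x‖)
    (t : Finset ι) :
    ‖∑ i ∈ t, m i • opAdj (Λ i) (φ i)‖ ≤ M * B * (∑ i ∈ t, ‖φ i‖ ^ q) ^ (1 / q) := by
  have hM₀ : 0 ≤ M := (abs_nonneg _).trans (hm (Classical.arbitrary ι))
  refine ContinuousLinearMap.opNorm_le_bound _ (by positivity) fun x => ?_
  have hΛt : (∑ i ∈ t, ‖Λ i x‖ ^ p) ^ (1 / p) ≤ B * ‖x‖ :=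
    (Real.rpow_finset_sum_le_rpow_tsum (hΛ x).1 (fun i => by positivity)
      (by simp [hpq.nonneg]) t).trans (hΛ x).2
  calc ‖(∑ i ∈ t, m i • opAdj (Λ i) (φ i)) x‖
      ≤ M * ((∑ i ∈ t, ‖φ i‖ ^ q) ^ (1 / q) * (∑ i ∈ t, ‖Λ i x‖ ^ p) ^ (1 / p)) :=
        norm_finset_sum_smul_opAdj_apply_le hpq hm t x
    _ ≤ M * ((∑ i ∈ t, ‖φ i‖ ^ q) ^ (1 / q) * (B * ‖x‖)) := by gcongr
    _ = M * B * (∑ i ∈ t, ‖φ i‖ ^ q) ^ (1 / q) * ‖x‖ := by ring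

end Multiplier

theorem multiplier_well_defined_and_bounded_general
    {X₁ X₂ : Type*} [NormedAddCommGroup X₁] [NormedSpace ℝ X₁]
    [NormedAddCommGroup X₂] [NormedSpace ℝ X₂]
    {Y : ℕ → Type*} [∀ i, NormedAddCommGroup (Y i)] [∀ i, NormedSpace ℝ (Y i)]
    (p q : ℝ) (hp : 1 < p) (hpq : 1 / p + 1 / q = 1)
    (Λ : ∀ i, X₂ →L[ℝ] Y i) (Θ : ∀ i, StrongDual ℝ X₁ →L[ℝ] StrongDual ℝ (Y i))
    (BΛ BΘ : ℝ) (hBΛ : 0 < BΛ)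
    (hΛ : ∀ x : X₂, Summable (fun i => ‖Λ i x‖ ^ p) ∧
      (∑' i, ‖Λ i x‖ ^ p) ^ (1 / p) ≤ BΛ * ‖x‖)
    (hΘ : ∀ g : StrongDual ℝ X₁, Summable (fun i => ‖Θ i g‖ ^ q) ∧
      (∑' i, ‖Θ i g‖ ^ q) ^ (1 / q) ≤ BΘ * ‖g‖)
    (m : ℕ → ℝ) (M : ℝ) (hM : IsLUB (Set.range fun i => |m i|) M) :
    ∀ g : StrongDual ℝ X₁, Summable (fun i => m i • opAdj (Λ i) (Θ i g)) ∧
      ‖∑' i, m i • opAdj (Λ i) (Θ i g)‖ ≤ BΛ * BΘ * M * ‖g‖ := by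
  intro g
  have hpq' : p.HolderConjugate q :=
    Real.holderConjugate_iff.2 ⟨hp, by simpa only [one_div] using hpq⟩
  have hm : ∀ i, |m i| ≤ M := fun i => hM.1 ⟨i, rfl⟩
  have hM₀ : 0 ≤ M := (abs_nonneg _).trans (hm 0)
  have hpartial := norm_finset_sum_smul_opAdj_le (φ := fun i => Θ i g) hpq' hm hBΛ.le hΛ
  have hsum : Summable fun i => m i • opAdj (Λ i) (Θ i g) :=
    summable_of_norm_finset_sum_le_mul_rpow (hΘ g).1 (fun i => by positivity)
      (by simp [hpq'.symm.pos]) (by positivity) hpartial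
  refine ⟨hsum, le_of_tendsto' (continuous_norm.tendsto _ |>.comp hsum.hasSum) fun t => ?_⟩
  calc ‖∑ i ∈ t, m i • opAdj (Λ i) (Θ i g)‖
      ≤ M * BΛ * (∑ i ∈ t, ‖Θ i g‖ ^ q) ^ (1 / q) := hpartial t
    _ ≤ M * BΛ * (BΘ * ‖g‖) := by
        gcongr
        exact (Real.rpow_finset_sum_le_rpow_tsum (hΘ g).1 (fun i => by positivity)
          (by simp [hpq'.symm.nonneg]) t).trans (hΘ g).2
    _ = BΛ * BΘ * M * ‖g‖ := by ring

/-- the (p,q)g-Bessel multiplier `M_{m,Λ,Θ} g = Σᵢ mᵢ Λᵢ* Θᵢ g` of a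
pg-Bessel sequence `Λ` for `X₂` (bound `B_Λ`), a qg-Bessel sequence `Θ` for `X₁*`
(bound `B_Θ`) and `m ∈ ℓ^∞` is well defined, the series converges unconditionally
(is summable), and `‖M_{m,Λ,Θ}‖ ≤ B_Λ B_Θ ‖m‖_∞`. -/
theorem multiplier_well_defined_and_bounded
    {X₁ X₂ : Type*} [NormedAddCommGroup X₁] [NormedSpace ℝ X₁] [CompleteSpace X₁]
    [NormedAddCommGroup X₂] [NormedSpace ℝ X₂] [CompleteSpace X₂]
    {Y : ℕ → Type*} [∀ i, NormedAddCommGroup (Y i)] [∀ i, NormedSpace ℝ (Y i)]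
    [∀ i, CompleteSpace (Y i)]
    (hreflX₁ : Function.Surjective (inclusionInDoubleDual ℝ X₁))
    (hreflX₂ : Function.Surjective (inclusionInDoubleDual ℝ X₂))
    (hreflY : ∀ i, Function.Surjective (inclusionInDoubleDual ℝ (Y i)))
    (p q : ℝ) (hp : 1 < p) (hpq : 1 / p + 1 / q = 1)
    (Λ : ∀ i, X₂ →L[ℝ] Y i) (Θ : ∀ i, StrongDual ℝ X₁ →L[ℝ] StrongDual ℝ (Y i))
    (BΛ BΘ : ℝ) (hBΛ : 0 < BΛ) (hBΘ : 0 < BΘ)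
    (hΛ : ∀ x : X₂, Summable (fun i => ‖Λ i x‖ ^ p) ∧
      (∑' i, ‖Λ i x‖ ^ p) ^ (1 / p) ≤ BΛ * ‖x‖)
    (hΘ : ∀ g : StrongDual ℝ X₁, Summable (fun i => ‖Θ i g‖ ^ q) ∧
      (∑' i, ‖Θ i g‖ ^ q) ^ (1 / q) ≤ BΘ * ‖g‖)
    (m : ℕ → ℝ) (M : ℝ) (hM : IsLUB (Set.range fun i => |m i|) M) :
    ∀ g : StrongDual ℝ X₁, Summable (fun i => m i • opAdj (Λ i) (Θ i g)) ∧
      ‖∑' i, m i • opAdj (Λ i) (Θ i g)‖ ≤ BΛ * BΘ * M * ‖g‖ :=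
  multiplier_well_defined_and_bounded_general p q hp hpq Λ Θ BΛ BΘ hBΛ hΛ hΘ m M hM
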